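/- The calculus LJm+(cut) is complete for first-order Kripke semantics: every sequent valid in all first-order Kripke models is derivable in LJm with cut. -/

import Mathlib

open FirstOrder

universe u v

/-- Formulas of intuitionistic predicate logic over a first-order language `L`,
with free variables of type `α`; quantifiers bind a fresh variable (`Option`). -/
inductive IFormula (L : FirstOrder.Language.{u, v}) : Type → Type (max u v + 1)
  | falsum {α : Type} : IFormula L α
  | rel {α : Type} {l : ℕ} (R : L.Relations l) (ts : Fin l → L.Term α) : IFormula L α
  | disj {α : Type} : IFormula L α → IFormula L α → IFormula L α
  | conj {α : Type} : IFormula L α → IFormula L α → IFormula L α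
  | impl {α : Type} : IFormula L α → IFormula L α → IFormula L α
  | ex {α : Type} : IFormula L (Option α) → IFormula L α
  | all {α : Type} : IFormula L (Option α) → IFormula L α

variable {L : FirstOrder.Language.{u, v}}

/-- Renaming of free variables. -/
def IFormula.relabel : ∀ {α β : Type}, (α → β) → IFormula L α → IFormula L β
  | _, _, _, .falsum => .falsum
  | _, _, f, .rel R ts => .rel R (fun i => (ts i).relabel f)
  | _, _, f, .disj a b => .disj (a.relabel f) (b.relabel f)
  | _, _, f, .conj a b => .conj (a.relabel f) (b.relabel f)
  | _, _, f, .impl a b => .impl (a.relabel f) (b.relabel f)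
  | _, _, f, .ex φ => .ex (φ.relabel (Option.map f))
  | _, _, f, .all φ => .all (φ.relabel (Option.map f))

/-- Simultaneous substitution of terms for free variables (capture cannot occur
since substituted terms contain no bound variables). -/
def IFormula.substF : ∀ {α β : Type}, IFormula L α → (α → L.Term β) → IFormula L β
  | _, _, .falsum, _ => .falsum
  | _, _, .rel R ts, σ => .rel R (fun i => (ts i).subst σ)
  | _, _, .disj a b, σ => .disj (a.substF σ) (b.substF σ)
  | _, _, .conj a b, σ => .conj (a.substF σ) (b.substF σ)
  | _, _, .impl a b, σ => .impl (a.substF σ) (b.substF σ)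
  | _, _, .ex φ, σ => .ex (φ.substF (fun o =>
      Option.elim o (Language.Term.var none) (fun a => (σ a).relabel some)))
  | _, _, .all φ, σ => .all (φ.substF (fun o =>
      Option.elim o (Language.Term.var none) (fun a => (σ a).relabel some)))

/-- Instantiation `α(t)` of the body of a quantifier by a term `t`. -/
def openF (φ : IFormula L (Option ℕ)) (t : L.Term ℕ) : IFormula L ℕ :=
  φ.substF (fun o => Option.elim o t Language.Term.var)

/-- Free variables of a term. -/
def tmFv {α : Type} : L.Term α → Set α
  | .var a => {a}
  | .func _ ts => ⋃ i, tmFv (ts i)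

/-- Free variables of a formula. -/
def fvF : ∀ {α : Type}, IFormula L α → Set α
  | _, .falsum => ∅
  | _, .rel _ ts => ⋃ i, tmFv (ts i)
  | _, .disj a b => fvF a ∪ fvF b
  | _, .conj a b => fvF a ∪ fvF b
  | _, .impl a b => fvF a ∪ fvF b
  | _, .ex φ => {a | some a ∈ fvF φ}
  | _, .all φ => {a | some a ∈ fvF φ}

/-- A Kripke model for a first-order language: a quasi-order of worlds with
expanding nonempty domains D(σ) ⊆ X and monotone interpretations of relation
and function symbols. -/
structure FKModel (L : FirstOrder.Language.{u, v}) where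
  W : Type
  ne : Nonempty W
  X : Type
  le : W → W → Prop
  le_refl : ∀ w, le w w
  le_trans : ∀ {a b c}, le a b → le b c → le a c
  D : W → Set X
  D_ne : ∀ w, (D w).Nonempty
  D_mono : ∀ {a b}, le a b → D a ⊆ D b
  funMap : ∀ {n : ℕ}, W → L.Functions n → (Fin n → X) → X
  funMap_mem : ∀ {n : ℕ} (w : W) (f : L.Functions n) (xs : Fin n → X),
    (∀ i, xs i ∈ D w) → funMap w f xs ∈ D w
  funMap_mono : ∀ {n : ℕ} {a b : W} (f : L.Functions n) (xs : Fin n → X),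
    le a b → (∀ i, xs i ∈ D a) → funMap a f xs = funMap b f xs
  RelMap : ∀ {n : ℕ}, W → L.Relations n → (Fin n → X) → Prop
  RelMap_dom : ∀ {n : ℕ} (w : W) (R : L.Relations n) (xs : Fin n → X),
    RelMap w R xs → ∀ i, xs i ∈ D w
  RelMap_mono : ∀ {n : ℕ} {a b : W} (R : L.Relations n) (xs : Fin n → X),
    le a b → RelMap a R xs → RelMap b R xs

/-- Value of a term at a world under an assignment. -/
def FKModel.tval (M : FKModel L) (w : M.W) {α : Type} (vv : α → M.X) :
    L.Term α → M.X
  | .var a => vv a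
  | .func f ts => M.funMap w f (fun i => M.tval w vv (ts i))

/-- Kripke forcing of a formula at a world under an assignment. -/
def FKModel.Force (M : FKModel L) : ∀ {α : Type}, M.W → (α → M.X) → IFormula L α → Prop
  | _, _, _, .falsum => False
  | _, w, vv, .rel R ts => M.RelMap w R (fun i => M.tval w vv (ts i))
  | _, w, vv, .disj a b => M.Force w vv a ∨ M.Force w vv b
  | _, w, vv, .conj a b => M.Force w vv a ∧ M.Force w vv b
  | _, w, vv, .impl a b => ∀ u, M.le w u → M.Force u vv a → M.Force u vv b
  | _, w, vv, .ex φ => ∃ c ∈ M.D w, M.Force w (fun o => Option.elim o c vv) φ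
  | _, w, vv, .all φ => ∀ u, M.le w u → ∀ c ∈ M.D u,
      M.Force u (fun o => Option.elim o c vv) φ

noncomputable instance {α : Type} : DecidableEq (IFormula L α) :=
  fun _ _ => Classical.dec _

/-- The multi-succedent sequent calculus LJm for intuitionistic predicate
logic (sequents are finite sets of formulas with free variables in ℕ);
when `cut = true` the cut rule is also available (LJm+(cut)). -/
inductive LJm (L : FirstOrder.Language.{u, v}) (cut : Bool) :
    Finset (IFormula L ℕ) → Finset (IFormula L ℕ) → Prop
  | axAtom {Γ Δ} {l : ℕ} {R : L.Relations l} {ts : Fin l → L.Term ℕ} :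
      IFormula.rel R ts ∈ Γ → IFormula.rel R ts ∈ Δ → LJm L cut Γ Δ
  | axBot {Γ Δ} : IFormula.falsum ∈ Γ → LJm L cut Γ Δ
  | disjL {Γ Δ} {a b : IFormula L ℕ} : a.disj b ∈ Γ →
      LJm L cut (insert a Γ) Δ → LJm L cut (insert b Γ) Δ → LJm L cut Γ Δ
  | disjR {Γ Δ} {a b : IFormula L ℕ} : a.disj b ∈ Δ →
      LJm L cut Γ (insert a (insert b Δ)) → LJm L cut Γ Δ
  | conjL {Γ Δ} {a b : IFormula L ℕ} : a.conj b ∈ Γ →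
      LJm L cut (insert a (insert b Γ)) Δ → LJm L cut Γ Δ
  | conjR {Γ Δ} {a b : IFormula L ℕ} : a.conj b ∈ Δ →
      LJm L cut Γ (insert a Δ) → LJm L cut Γ (insert b Δ) → LJm L cut Γ Δ
  | implL {Γ Δ} {a b : IFormula L ℕ} : a.impl b ∈ Γ →
      LJm L cut Γ (insert a Δ) → LJm L cut (insert b Γ) Δ → LJm L cut Γ Δ
  | implR {Γ Δ} {a b : IFormula L ℕ} : a.impl b ∈ Δ →
      LJm L cut (insert a Γ) {b} → LJm L cut Γ Δ
  | exL {Γ Δ} {φ : IFormula L (Option ℕ)} {a : ℕ} : IFormula.ex φ ∈ Γ →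
      (∀ ψ ∈ Γ, a ∉ fvF ψ) → (∀ ψ ∈ Δ, a ∉ fvF ψ) →
      LJm L cut (insert (openF φ (Language.Term.var a)) Γ) Δ → LJm L cut Γ Δ
  | exR {Γ Δ} {φ : IFormula L (Option ℕ)} (t : L.Term ℕ) : IFormula.ex φ ∈ Δ →
      LJm L cut Γ (insert (openF φ t) Δ) → LJm L cut Γ Δ
  | allL {Γ Δ} {φ : IFormula L (Option ℕ)} (t : L.Term ℕ) : IFormula.all φ ∈ Γ →
      LJm L cut (insert (openF φ t) Γ) Δ → LJm L cut Γ Δ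
  | allR {Γ Δ} {φ : IFormula L (Option ℕ)} {a : ℕ} : IFormula.all φ ∈ Δ →
      (∀ ψ ∈ Γ, a ∉ fvF ψ) → (∀ ψ ∈ Δ, a ∉ fvF ψ) →
      LJm L cut Γ {openF φ (Language.Term.var a)} → LJm L cut Γ Δ
  | cutRule {Γ Δ} {α : IFormula L ℕ} : cut = true →
      LJm L cut Γ (insert α Δ) → LJm L cut (insert α Γ) Δ → LJm L cut Γ Δ

/-- Validity of a sequent in all first-order Kripke models, under every
assignment of the free variables into the domain of the world. -/
def FOValid (L : FirstOrder.Language.{u, v})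
    (Γ Δ : Finset (IFormula L ℕ)) : Prop :=
  ∀ (M : FKModel L) (w : M.W) (vv : ℕ → M.X), (∀ n, vv n ∈ M.D w) →
    (∀ γ ∈ Γ, M.Force w vv γ) → ∃ δ ∈ Δ, M.Force w vv δ

/-!
The proof builds a canonical Kripke countermodel. Its worlds are prime, deductively closed
theories with Henkin witnesses; the truth conditions of `→` and `∀` are met by extending a
theory with the Lindenbaum construction, and the witnesses needed for existentials and for
refuting universals are drawn from a fresh layer of variables. The domain of a world consists of
the terms in its variables, and by the truth lemma a formula is forced at a world iff it belongs
to its theory; an underivable sequent `Γ ⇒ Δ` is therefore refuted at a world containing `Γ`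
and no formula of `Δ`.

Worlds and domains of a Kripke model live in `Type`, so the construction is carried out for
the formulas of a countable language `L₀ →ᴸ L` containing the symbols of `Γ` and `Δ`: its terms
form the domains, and theories are coded by sets of indices in an enumeration of its formulas.
-/

open FirstOrder Language

namespace FirstOrder.Language.Term

variable {α β γ : Type}

theorem subst_var (t : L.Term α) : t.subst Term.var = t := by
  induction t with
  | var => rfl
  | func f ts ih => exact congrArg (func f) (funext ih)

theorem subst_subst (t : L.Term α) (σ : α → L.Term β) (τ : β → L.Term γ) :
    (t.subst σ).subst τ = t.subst fun a => (σ a).subst τ := by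
  induction t with
  | var => rfl
  | func f ts ih => exact congrArg (func f) (funext ih)

theorem relabel_eq_subst (f : α → β) (t : L.Term α) : t.relabel f = t.subst (var ∘ f) := by
  induction t with
  | var => rfl
  | func g ts ih => exact congrArg (func g) (funext ih)

theorem subst_congr {t : L.Term α} {σ τ : α → L.Term β} (h : ∀ a ∈ tmFv t, σ a = τ a) :
    t.subst σ = t.subst τ := by
  induction t with
  | var a => exact h a rfl
  | func f ts ih =>
    exact congrArg (func f) (funext fun i => ih i fun a ha => h a (Set.mem_iUnion.2 ⟨i, ha⟩))

end FirstOrder.Language.Term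

theorem tmFv_subst {α β : Type} (t : L.Term α) (σ : α → L.Term β) :
    tmFv (t.subst σ) = ⋃ a ∈ tmFv t, tmFv (σ a) := by
  induction t with
  | var => simp [tmFv, Term.subst]
  | func f ts ih =>
    simp only [tmFv, Term.subst, ih]
    exact (Set.biUnion_iUnion _ _).symm

theorem tmFv_relabel {α β : Type} (f : α → β) (t : L.Term α) :
    tmFv (t.relabel f) = f '' tmFv t := by
  simp [Term.relabel_eq_subst, tmFv_subst, tmFv, Set.image_eq_iUnion]

theorem tmFv_finite {α : Type} (t : L.Term α) : (tmFv t).Finite := by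
  induction t with
  | var => exact Set.finite_singleton _
  | func f ts ih => exact Set.finite_iUnion ih

namespace IFormula

variable {α β γ : Type}

def liftSubst (σ : α → L.Term β) : Option α → L.Term (Option β) :=
  fun o => Option.elim o (Term.var none) fun a => (σ a).relabel some

theorem substF_ex (φ : IFormula L (Option α)) (σ : α → L.Term β) :
    (ex φ).substF σ = ex (φ.substF (liftSubst σ)) := rfl

theorem substF_all (φ : IFormula L (Option α)) (σ : α → L.Term β) :
    (all φ).substF σ = all (φ.substF (liftSubst σ)) := rfl

theorem liftSubst_var : liftSubst (L := L) (Term.var : α → L.Term α) = Term.var := by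
  funext o; cases o <;> rfl

theorem liftSubst_subst (σ : α → L.Term β) (τ : β → L.Term γ) (o : Option α) :
    (liftSubst σ o).subst (liftSubst τ) = liftSubst (fun a => (σ a).subst τ) o := by
  cases o with
  | none => rfl
  | some a =>
    show ((σ a).relabel some).subst (liftSubst τ) = ((σ a).subst τ).relabel some
    rw [Term.relabel_eq_subst, Term.subst_subst, Term.relabel_eq_subst, Term.subst_subst]
    exact congrArg _ (funext fun b => Term.relabel_eq_subst _ _)

theorem substF_congr {φ : IFormula L α} {σ τ : α → L.Term β}
    (h : ∀ a ∈ fvF φ, σ a = τ a) : φ.substF σ = φ.substF τ := by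
  induction φ generalizing β with
  | falsum => rfl
  | rel R ts =>
    exact congrArg (rel R) (funext fun i => Term.subst_congr fun a ha =>
      h a (Set.mem_iUnion.2 ⟨i, ha⟩))
  | disj a b iha ihb | conj a b iha ihb | impl a b iha ihb =>
    simp only [substF]
    rw [iha fun x hx => h x (Or.inl hx), ihb fun x hx => h x (Or.inr hx)]
  | ex φ ih | all φ ih =>
    simp only [substF]
    rw [ih]
    rintro (_ | a) ha
    · rfl
    · exact congrArg (Term.relabel some) (h a ha)

theorem substF_substF (φ : IFormula L α) (σ : α → L.Term β) (τ : β → L.Term γ) :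
    (φ.substF σ).substF τ = φ.substF fun a => (σ a).subst τ := by
  induction φ generalizing β γ with
  | falsum => rfl
  | rel R ts => exact congrArg (rel R) (funext fun i => Term.subst_subst _ _ _)
  | disj a b iha ihb | conj a b iha ihb | impl a b iha ihb =>
    simp only [substF]; rw [iha, ihb]
  | ex φ ih | all φ ih =>
    simp only [substF]
    rw [ih]
    exact congrArg _ (congrArg _ (funext (liftSubst_subst σ τ)))

theorem substF_var (φ : IFormula L α) : φ.substF Term.var = φ := by
  induction φ with
  | falsum => rfl
  | rel R ts => exact congrArg (rel R) (funext fun i => Term.subst_var _)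
  | disj a b iha ihb | conj a b iha ihb | impl a b iha ihb =>
    simp only [substF]; rw [iha, ihb]
  | ex φ ih | all φ ih =>
    exact congrArg _ ((congrArg φ.substF liftSubst_var).trans ih)

end IFormula

theorem fvF_substF {α β : Type} (φ : IFormula L α) (σ : α → L.Term β) :
    fvF (φ.substF σ) = ⋃ a ∈ fvF φ, tmFv (σ a) := by
  induction φ generalizing β with
  | falsum => simp [IFormula.substF, fvF]
  | rel R ts =>
    simp only [IFormula.substF, fvF, tmFv_subst]
    exact (Set.biUnion_iUnion _ _).symm
  | disj a b iha ihb | conj a b iha ihb | impl a b iha ihb =>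
    simp only [IFormula.substF, fvF, iha, ihb]
    exact (Set.biUnion_union _ _ _).symm
  | ex φ ih | all φ ih =>
    simp only [IFormula.substF, fvF, ih]
    ext b
    simp [Option.exists, tmFv, tmFv_relabel]

theorem fvF_finite {α : Type} (φ : IFormula L α) : (fvF φ).Finite := by
  induction φ with
  | falsum => exact Set.finite_empty
  | rel R ts => exact Set.finite_iUnion fun i => tmFv_finite _
  | disj a b iha ihb | conj a b iha ihb | impl a b iha ihb => exact iha.union ihb
  | ex φ ih | all φ ih => exact ih.preimage (Option.some_injective _).injOn

theorem exists_fresh {s : Set ℕ} (hs : s.Infinite) (Γ : Finset (IFormula L ℕ)) :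
    ∃ b ∈ s, ∀ φ ∈ Γ, b ∉ fvF φ := by
  obtain ⟨b, hbs, hb⟩ := (hs.sdiff (Γ.finite_toSet.biUnion fun φ _ => fvF_finite φ)).nonempty
  exact ⟨b, hbs, fun φ hφ hbφ => hb (Set.mem_biUnion hφ hbφ)⟩

theorem substF_update_of_notMem {α β : Type} [DecidableEq α] {φ : IFormula L α} {a : α}
    (h : a ∉ fvF φ) (σ : α → L.Term β) (t : L.Term β) :
    φ.substF (Function.update σ a t) = φ.substF σ :=
  IFormula.substF_congr fun _ hx => Function.update_of_ne (ne_of_mem_of_not_mem hx h) _ _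

theorem openF_substF (φ : IFormula L (Option ℕ)) (t : L.Term ℕ) (σ : ℕ → L.Term ℕ) :
    (openF φ t).substF σ = openF (φ.substF (IFormula.liftSubst σ)) (t.subst σ) := by
  simp only [openF, IFormula.substF_substF]
  refine IFormula.substF_congr ?_
  rintro (_ | a) _
  · rfl
  · show σ a = ((σ a).relabel some).subst _
    rw [Term.relabel_eq_subst, Term.subst_subst]
    exact (Term.subst_var _).symm

theorem openF_substF_liftSubst {α : Type} (φ : IFormula L (Option α)) (σ : α → L.Term ℕ)
    (s : L.Term ℕ) :
    openF (φ.substF (IFormula.liftSubst σ)) s = φ.substF fun o => Option.elim o s σ := by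
  simp only [openF, IFormula.substF_substF]
  refine IFormula.substF_congr ?_
  rintro (_ | a) _
  · rfl
  · show ((σ a).relabel some).subst _ = σ a
    rw [Term.relabel_eq_subst, Term.subst_subst]
    exact Term.subst_var _

theorem fvF_openF_subset (φ : IFormula L (Option ℕ)) (t : L.Term ℕ) :
    fvF (openF φ t) ⊆ tmFv t ∪ fvF (IFormula.ex φ) := by
  simp only [openF, fvF_substF, Set.iUnion_subset_iff]
  rintro (_ | a) ha
  · exact Set.subset_union_left
  · simp only [Option.elim, tmFv, Set.singleton_subset_iff]
    exact Or.inr ha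

theorem openF_var_substF_update {φ : IFormula L (Option ℕ)} {a : ℕ} (h : some a ∉ fvF φ)
    (σ : ℕ → L.Term ℕ) (b : ℕ) :
    (openF φ (Term.var a)).substF (Function.update σ a (Term.var b)) =
      openF (φ.substF (IFormula.liftSubst σ)) (Term.var b) := by
  rw [openF_substF]
  congr 1
  · refine IFormula.substF_congr ?_
    rintro (_ | x) hx
    · rfl
    · exact congrArg _ (Function.update_of_ne (by rintro rfl; exact h hx) _ _)
  · exact Function.update_self _ _ _

theorem Finset.forall_mem_insert_of_forall_mem {β γ : Type*} [DecidableEq β] [DecidableEq γ]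
    {f : β → γ} {s : Finset β} {t : Finset γ} (hst : ∀ x ∈ s, f x ∈ t) {a : β} {b : γ}
    (hab : f a = b) :
    ∀ x ∈ insert a s, f x ∈ insert b t := by
  simp only [Finset.forall_mem_insert, hab, Finset.mem_insert_self, true_and]
  exact fun x hx => Finset.mem_insert_of_mem (hst x hx)

namespace LJm

variable {c : Bool}

open Finset in
/-- The eigenvariable `a` of `exL` and `allR` is renamed to a variable `b` fresh for `Γ'` and
`Δ'`, by substituting `Function.update σ a (var b)` in the premise. -/
theorem subst {Γ Δ : Finset (IFormula L ℕ)} (d : LJm L c Γ Δ) (σ : ℕ → L.Term ℕ)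
    {Γ' Δ' : Finset (IFormula L ℕ)} (hΓ : ∀ φ ∈ Γ, φ.substF σ ∈ Γ')
    (hΔ : ∀ φ ∈ Δ, φ.substF σ ∈ Δ') : LJm L c Γ' Δ' := by
  have ins {f : IFormula L ℕ → IFormula L ℕ} {s t : Finset (IFormula L ℕ)}
      (h : ∀ x ∈ s, f x ∈ t) {a b} (hab : f a = b) : ∀ x ∈ insert a s, f x ∈ insert b t :=
    forall_mem_insert_of_forall_mem h hab
  have single (f : IFormula L ℕ → IFormula L ℕ) (φ) :
      ∀ ψ ∈ ({φ} : Finset _), f ψ ∈ ({f φ} : Finset _) := by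
    simp
  induction d generalizing σ Γ' Δ' with
  | axAtom h₁ h₂ => exact axAtom (hΓ _ h₁) (hΔ _ h₂)
  | axBot h => exact axBot (hΓ _ h)
  | disjL h _ _ ih₁ ih₂ =>
    exact disjL (hΓ _ h) (ih₁ σ (ins hΓ rfl) hΔ) (ih₂ σ (ins hΓ rfl) hΔ)
  | disjR h _ ih => exact disjR (hΔ _ h) (ih σ hΓ (ins (ins hΔ rfl) rfl))
  | conjL h _ ih => exact conjL (hΓ _ h) (ih σ (ins (ins hΓ rfl) rfl) hΔ)
  | conjR h _ _ ih₁ ih₂ =>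
    exact conjR (hΔ _ h) (ih₁ σ hΓ (ins hΔ rfl)) (ih₂ σ hΓ (ins hΔ rfl))
  | implL h _ _ ih₁ ih₂ =>
    exact implL (hΓ _ h) (ih₁ σ hΓ (ins hΔ rfl)) (ih₂ σ (ins hΓ rfl) hΔ)
  | implR h _ ih => exact implR (hΔ _ h) (ih σ (ins hΓ rfl) (single _ _))
  | exR t h _ ih => exact exR (t.subst σ) (hΔ _ h) (ih σ hΓ (ins hΔ (openF_substF _ _ _)))
  | allL t h _ ih => exact allL (t.subst σ) (hΓ _ h) (ih σ (ins hΓ (openF_substF _ _ _)) hΔ)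
  | @exL Γ Δ φ a h hΓa hΔa _ ih =>
    obtain ⟨b, -, hb⟩ := exists_fresh Set.infinite_univ (Γ' ∪ Δ')
    have hσ {ψ} (ha : a ∉ fvF ψ) := substF_update_of_notMem ha σ (Term.var b)
    refine exL (φ := φ.substF (IFormula.liftSubst σ)) (a := b) (hΓ _ h)
      (fun ψ hψ => hb ψ (mem_union_left _ hψ)) (fun ψ hψ => hb ψ (mem_union_right _ hψ))
      (ih (Function.update σ a (Term.var b)) ?_ ?_)
    · exact ins (fun ψ hψ => hσ (hΓa ψ hψ) ▸ hΓ ψ hψ) (openF_var_substF_update (hΓa _ h) σ b)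
    · exact fun ψ hψ => hσ (hΔa ψ hψ) ▸ hΔ ψ hψ
  | @allR Γ Δ φ a h hΓa hΔa _ ih =>
    obtain ⟨b, -, hb⟩ := exists_fresh Set.infinite_univ (Γ' ∪ Δ')
    have hσ {ψ} (ha : a ∉ fvF ψ) := substF_update_of_notMem ha σ (Term.var b)
    refine allR (φ := φ.substF (IFormula.liftSubst σ)) (a := b) (hΔ _ h)
      (fun ψ hψ => hb ψ (mem_union_left _ hψ)) (fun ψ hψ => hb ψ (mem_union_right _ hψ))
      (ih (Function.update σ a (Term.var b)) ?_ ?_)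
    · exact fun ψ hψ => hσ (hΓa ψ hψ) ▸ hΓ ψ hψ
    · rw [← openF_var_substF_update (hΔa _ h) σ b]
      exact single _ _
  | cutRule hc _ _ ih₁ ih₂ =>
    exact cutRule (α := _) hc (ih₁ σ hΓ (ins hΔ rfl)) (ih₂ σ (ins hΓ rfl) hΔ)

theorem weaken {Γ Δ Γ' Δ' : Finset (IFormula L ℕ)} (d : LJm L c Γ Δ) (hΓ : Γ ⊆ Γ')
    (hΔ : Δ ⊆ Δ') : LJm L c Γ' Δ' :=
  d.subst Term.var (fun φ hφ => (φ.substF_var).symm ▸ hΓ hφ)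
    (fun φ hφ => (φ.substF_var).symm ▸ hΔ hφ)

theorem identity_substF {α : Type} (φ : IFormula L α) (σ : α → L.Term ℕ)
    {Γ Δ : Finset (IFormula L ℕ)} (h₁ : φ.substF σ ∈ Γ) (h₂ : φ.substF σ ∈ Δ) :
    LJm L c Γ Δ := by
  induction φ generalizing Γ Δ with
  | falsum => exact axBot h₁
  | rel R ts => exact axAtom h₁ h₂
  | disj a b iha ihb =>
    exact disjL h₁ (disjR h₂ (iha σ (Finset.mem_insert_self _ _) (Finset.mem_insert_self _ _)))
      (disjR h₂ (ihb σ (Finset.mem_insert_self _ _)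
        (Finset.mem_insert_of_mem (Finset.mem_insert_self _ _))))
  | conj a b iha ihb =>
    exact conjL h₁ (conjR h₂ (iha σ (Finset.mem_insert_self _ _) (Finset.mem_insert_self _ _))
      (ihb σ (Finset.mem_insert_of_mem (Finset.mem_insert_self _ _))
        (Finset.mem_insert_self _ _)))
  | impl a b iha ihb =>
    exact implR h₂ (implL (Finset.mem_insert_of_mem h₁)
      (iha σ (Finset.mem_insert_self _ _) (Finset.mem_insert_self _ _))
      (ihb σ (Finset.mem_insert_self _ _) (Finset.mem_singleton_self _)))
  | ex φ ih =>
    obtain ⟨a, -, ha⟩ := exists_fresh Set.infinite_univ (Γ ∪ Δ)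
    refine exL (φ := φ.substF (IFormula.liftSubst σ)) (a := a) h₁
      (fun ψ hψ => ha ψ (Finset.mem_union_left _ hψ))
      (fun ψ hψ => ha ψ (Finset.mem_union_right _ hψ))
      (exR (φ := φ.substF (IFormula.liftSubst σ)) (Term.var a) h₂ ?_)
    rw [openF_substF_liftSubst]
    exact ih _ (Finset.mem_insert_self _ _) (Finset.mem_insert_self _ _)
  | all φ ih =>
    obtain ⟨a, -, ha⟩ := exists_fresh Set.infinite_univ (Γ ∪ Δ)
    refine allR (φ := φ.substF (IFormula.liftSubst σ)) (a := a) h₂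
      (fun ψ hψ => ha ψ (Finset.mem_union_left _ hψ))
      (fun ψ hψ => ha ψ (Finset.mem_union_right _ hψ))
      (allL (φ := φ.substF (IFormula.liftSubst σ)) (Term.var a) h₁ ?_)
    rw [openF_substF_liftSubst]
    exact ih _ (Finset.mem_insert_self _ _) (Finset.mem_singleton_self _)

theorem identity {φ : IFormula L ℕ} {Γ Δ : Finset (IFormula L ℕ)} (h₁ : φ ∈ Γ) (h₂ : φ ∈ Δ) :
    LJm L c Γ Δ :=
  identity_substF φ Term.var (φ.substF_var.symm ▸ h₁) (φ.substF_var.symm ▸ h₂)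

end LJm

def Proves (T : Set (IFormula L ℕ)) (Δ : Finset (IFormula L ℕ)) : Prop :=
  ∃ Γ : Finset (IFormula L ℕ), ↑Γ ⊆ T ∧ LJm L true Γ Δ

namespace Proves

variable {T T' : Set (IFormula L ℕ)} {Δ Δ' : Finset (IFormula L ℕ)}

theorem mono (h : Proves T Δ) (hT : T ⊆ T') : Proves T' Δ :=
  let ⟨Γ, hΓ, d⟩ := h
  ⟨Γ, hΓ.trans hT, d⟩

theorem mono_right (h : Proves T Δ) (hΔ : Δ ⊆ Δ') : Proves T Δ' :=
  let ⟨Γ, hΓ, d⟩ := h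
  ⟨Γ, hΓ, d.weaken subset_rfl hΔ⟩

theorem of_mem {φ : IFormula L ℕ} (h₁ : φ ∈ T) (h₂ : φ ∈ Δ) : Proves T Δ :=
  ⟨{φ}, by simpa using h₁, LJm.identity (Finset.mem_singleton_self φ) h₂⟩

theorem insert_iff {φ : IFormula L ℕ} :
    Proves (insert φ T) Δ ↔ ∃ Γ : Finset (IFormula L ℕ), ↑Γ ⊆ T ∧ LJm L true (insert φ Γ) Δ := by
  constructor
  · rintro ⟨Γ, hΓ, d⟩
    refine ⟨Γ.erase φ, ?_, d.weaken (Finset.insert_erase_subset φ Γ) subset_rfl⟩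
    rwa [Finset.coe_erase, Set.sdiff_subset_iff, ← Set.insert_eq]
  · rintro ⟨Γ, hΓ, d⟩
    exact ⟨insert φ Γ, by simpa using Set.insert_subset_insert hΓ, d⟩

theorem cut {φ : IFormula L ℕ} (h₁ : Proves T {φ}) (h₂ : Proves (insert φ T) Δ) : Proves T Δ := by
  obtain ⟨Γ₁, hΓ₁, d₁⟩ := h₁
  obtain ⟨Γ₂, hΓ₂, d₂⟩ := insert_iff.1 h₂
  refine ⟨Γ₁ ∪ Γ₂, by simpa using ⟨hΓ₁, hΓ₂⟩, LJm.cutRule (α := φ) rfl ?_ ?_⟩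
  · exact d₁.weaken Finset.subset_union_left (by simp)
  · exact d₂.weaken (Finset.insert_subset_insert _ Finset.subset_union_right) subset_rfl

theorem disjL {a b : IFormula L ℕ} (h : a.disj b ∈ T) (ha : Proves (insert a T) Δ)
    (hb : Proves (insert b T) Δ) : Proves T Δ := by
  obtain ⟨Γ₁, hΓ₁, d₁⟩ := insert_iff.1 ha
  obtain ⟨Γ₂, hΓ₂, d₂⟩ := insert_iff.1 hb
  refine ⟨insert (a.disj b) (Γ₁ ∪ Γ₂), ?_, LJm.disjL (Finset.mem_insert_self _ _) ?_ ?_⟩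
  · push_cast
    exact Set.insert_subset h (Set.union_subset hΓ₁ hΓ₂)
  · exact d₁.weaken (Finset.insert_subset_insert _
      (Finset.subset_union_left.trans (Finset.subset_insert _ _))) subset_rfl
  · exact d₂.weaken (Finset.insert_subset_insert _
      (Finset.subset_union_right.trans (Finset.subset_insert _ _))) subset_rfl

theorem implR {a b : IFormula L ℕ} (h : Proves (insert a T) {b}) : Proves T {a.impl b} :=
  let ⟨Γ, hΓ, d⟩ := insert_iff.1 h
  ⟨Γ, hΓ, LJm.implR (Finset.mem_singleton_self _) d⟩

theorem exL {φ : IFormula L (Option ℕ)} {c : ℕ} (h : Proves (insert (openF φ (Term.var c)) T) Δ)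
    (hφ : IFormula.ex φ ∈ T) (hT : ∀ ψ ∈ T, c ∉ fvF ψ) (hΔ : ∀ ψ ∈ Δ, c ∉ fvF ψ) :
    Proves T Δ := by
  obtain ⟨Γ, hΓ, d⟩ := insert_iff.1 h
  have hΓ' : ↑(insert (IFormula.ex φ) Γ) ⊆ T := by
    push_cast
    exact Set.insert_subset hφ hΓ
  exact ⟨_, hΓ', LJm.exL (Finset.mem_insert_self _ _) (fun ψ hψ => hT ψ (hΓ' hψ)) hΔ
    (d.weaken (Finset.insert_subset_insert _ (Finset.subset_insert _ _)) subset_rfl)⟩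

theorem allR {φ : IFormula L (Option ℕ)} {c : ℕ} (h : Proves T {openF φ (Term.var c)})
    (hT : ∀ ψ ∈ T, c ∉ fvF ψ) (hφ : c ∉ fvF (IFormula.all φ)) : Proves T {IFormula.all φ} :=
  let ⟨Γ, hΓ, d⟩ := h
  ⟨Γ, hΓ, LJm.allR (Finset.mem_singleton_self _) (fun ψ hψ => hT ψ (hΓ hψ)) (by simpa using hφ) d⟩

theorem disjR_left {a b : IFormula L ℕ} (h : a ∈ T) : Proves T {a.disj b} :=
  ⟨{a}, by simpa using h, LJm.disjR (Finset.mem_singleton_self _)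
    (LJm.identity (Finset.mem_singleton_self _) (Finset.mem_insert_self _ _))⟩

theorem disjR_right {a b : IFormula L ℕ} (h : b ∈ T) : Proves T {a.disj b} :=
  ⟨{b}, by simpa using h, LJm.disjR (Finset.mem_singleton_self _)
    (LJm.identity (Finset.mem_singleton_self _) (by simp))⟩

theorem conjR {a b : IFormula L ℕ} (ha : a ∈ T) (hb : b ∈ T) : Proves T {a.conj b} :=
  ⟨{a, b}, by simp [Set.insert_subset_iff, ha, hb], LJm.conjR (Finset.mem_singleton_self _)
    (LJm.identity (by simp) (Finset.mem_insert_self _ _))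
    (LJm.identity (by simp) (Finset.mem_insert_self _ _))⟩

theorem conjL_left {a b : IFormula L ℕ} (h : a.conj b ∈ T) : Proves T {a} :=
  ⟨{a.conj b}, by simpa using h, LJm.conjL (Finset.mem_singleton_self _)
    (LJm.identity (Finset.mem_insert_self _ _) (Finset.mem_singleton_self _))⟩

theorem conjL_right {a b : IFormula L ℕ} (h : a.conj b ∈ T) : Proves T {b} :=
  ⟨{a.conj b}, by simpa using h, LJm.conjL (Finset.mem_singleton_self _)
    (LJm.identity (by simp) (Finset.mem_singleton_self _))⟩

theorem implL {a b : IFormula L ℕ} (h : a.impl b ∈ T) (ha : a ∈ T) : Proves T {b} :=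
  ⟨{a.impl b, a}, by simp [Set.insert_subset_iff, h, ha], LJm.implL (Finset.mem_insert_self _ _)
    (LJm.identity (by simp) (Finset.mem_insert_self _ _))
    (LJm.identity (Finset.mem_insert_self _ _) (Finset.mem_singleton_self _))⟩

theorem exR {φ : IFormula L (Option ℕ)} {t : L.Term ℕ} (h : openF φ t ∈ T) :
    Proves T {IFormula.ex φ} :=
  ⟨{openF φ t}, by simpa using h, LJm.exR t (Finset.mem_singleton_self _)
    (LJm.identity (Finset.mem_singleton_self _) (Finset.mem_insert_self _ _))⟩

theorem allL {φ : IFormula L (Option ℕ)} (t : L.Term ℕ) (h : IFormula.all φ ∈ T) :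
    Proves T {openF φ t} :=
  ⟨{IFormula.all φ}, by simpa using h, LJm.allL t (Finset.mem_singleton_self _)
    (LJm.identity (Finset.mem_insert_self _ _) (Finset.mem_singleton_self _))⟩

theorem exists_of_iUnion {T : ℕ → Set (IFormula L ℕ)} (hT : Monotone T)
    (h : Proves (⋃ n, T n) Δ) : ∃ n, Proves (T n) Δ :=
  let ⟨Γ, hΓ, d⟩ := h
  let ⟨n, hn⟩ := hT.directed_le.exists_mem_subset_of_finset_subset_biUnion hΓ
  ⟨n, Γ, hn, d⟩

end Proves

universe u' v'

namespace FirstOrder.Language.LHom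

variable {L₀ : FirstOrder.Language.{u', v'}} (ϕ : L₀ →ᴸ L) {α β : Type}

theorem onTerm_relabel (f : α → β) (t : L₀.Term α) :
    ϕ.onTerm (t.relabel f) = (ϕ.onTerm t).relabel f := by
  induction t with
  | var => rfl
  | func g ts ih => exact congrArg (Term.func _) (funext ih)

theorem onTerm_subst (t : L₀.Term α) (σ : α → L₀.Term β) :
    ϕ.onTerm (t.subst σ) = (ϕ.onTerm t).subst (ϕ.onTerm ∘ σ) := by
  induction t with
  | var => rfl
  | func g ts ih => exact congrArg (Term.func _) (funext ih)

end FirstOrder.Language.LHom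

theorem tmFv_onTerm {L₀ : FirstOrder.Language.{u', v'}} (ϕ : L₀ →ᴸ L) {α : Type} (t : L₀.Term α) :
    tmFv (ϕ.onTerm t) = tmFv t := by
  induction t with
  | var => rfl
  | func g ts ih => exact Set.iUnion_congr ih

namespace IFormula

variable {L₀ : FirstOrder.Language.{u', v'}} (ϕ : L₀ →ᴸ L)

def mapLang : ∀ {α : Type}, IFormula L₀ α → IFormula L α
  | _, falsum => falsum
  | _, rel R ts => rel (ϕ.onRelation R) fun i => ϕ.onTerm (ts i)
  | _, disj a b => disj a.mapLang b.mapLang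
  | _, conj a b => conj a.mapLang b.mapLang
  | _, impl a b => impl a.mapLang b.mapLang
  | _, ex φ => ex φ.mapLang
  | _, all φ => all φ.mapLang

variable {ϕ}

theorem mapLang_substF {α β : Type} (ψ : IFormula L₀ α) (σ : α → L₀.Term β) :
    (ψ.substF σ).mapLang ϕ = (ψ.mapLang ϕ).substF (ϕ.onTerm ∘ σ) := by
  induction ψ generalizing β with
  | falsum => rfl
  | rel R ts => exact congrArg (rel _) (funext fun i => ϕ.onTerm_subst _ _)
  | disj a b iha ihb | conj a b iha ihb | impl a b iha ihb =>
    simp only [substF, mapLang, iha, ihb]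
  | ex φ ih | all φ ih =>
    simp only [substF, mapLang, ih]
    congr 2
    funext o
    cases o
    · rfl
    · exact ϕ.onTerm_relabel _ _

theorem fvF_mapLang {α : Type} (ψ : IFormula L₀ α) : fvF (ψ.mapLang ϕ) = fvF ψ := by
  induction ψ with
  | falsum => rfl
  | rel R ts => exact Set.iUnion_congr fun i => tmFv_onTerm ϕ _
  | disj a b iha ihb | conj a b iha ihb | impl a b iha ihb =>
    simp only [mapLang, fvF, iha, ihb]
  | ex φ ih | all φ ih => simp only [mapLang, fvF, ih]

theorem mapLang_openF (ψ : IFormula L₀ (Option ℕ)) (t : L₀.Term ℕ) :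
    (openF ψ t).mapLang ϕ = openF (ψ.mapLang ϕ) (ϕ.onTerm t) := by
  rw [openF, mapLang_substF, openF]
  congr 1
  funext o
  cases o <;> rfl

def height : ∀ {α : Type}, IFormula L α → ℕ
  | _, falsum | _, rel _ _ => 0
  | _, disj a b | _, conj a b | _, impl a b => max a.height b.height + 1
  | _, ex φ | _, all φ => φ.height + 1

variable [∀ n, Countable (L.Functions n)] [∀ n, Countable (L.Relations n)]

theorem countable_setOf_height_lt (k : ℕ) :
    ∀ {α : Type} [Countable α], {φ : IFormula L α | φ.height < k}.Countable := by
  induction k with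
  | zero => simp
  | succ k ih =>
    intro α _
    set S := {φ : IFormula L α | φ.height < k}
    set S' := {φ : IFormula L (Option α) | φ.height < k}
    have hS : S.Countable := ih
    have hS' : S'.Countable := ih
    have hrel := Set.countable_range fun p : Σ l, L.Relations l × (Fin l → L.Term α) =>
      rel p.2.1 p.2.2
    refine (((((((Set.countable_singleton falsum).union hrel).union
      (hS.image2 hS disj)).union (hS.image2 hS conj)).union (hS.image2 hS impl)).union
      (hS'.image ex)).union (hS'.image all)).mono ?_
    intro φ hφ
    cases φ <;> simp_all [height, S, S']

instance {α : Type} [Countable α] : Countable (IFormula L α) := by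
  refine Set.countable_univ_iff.1
    ((Set.countable_iUnion fun k => countable_setOf_height_lt k).mono fun φ _ => ?_)
  exact Set.mem_iUnion.2 ⟨φ.height + 1, Nat.lt_succ_self _⟩

end IFormula

namespace FirstOrder.Language.Term

def funSymbols {α : Type} : L.Term α → Set (Σ n, L.Functions n)
  | var _ => ∅
  | func (l := n) f ts => insert ⟨n, f⟩ (⋃ i, (ts i).funSymbols)

theorem funSymbols_finite {α : Type} (t : L.Term α) : t.funSymbols.Finite := by
  induction t with
  | var => exact Set.finite_empty
  | func f ts ih => exact (Set.finite_iUnion ih).insert _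

theorem mem_range_onTerm {L₀ : FirstOrder.Language.{u', v'}} {ϕ : L₀ →ᴸ L} {α : Type}
    {t : L.Term α} (h : ∀ s ∈ t.funSymbols, ∃ f, ϕ.onFunction f = s.2) :
    t ∈ Set.range ϕ.onTerm := by
  induction t with
  | var a => exact ⟨var a, rfl⟩
  | func f ts ih =>
    obtain ⟨f₀, hf₀⟩ := h _ (Set.mem_insert _ _)
    choose u hu using fun i =>
      ih i fun s hs => h s (Set.mem_insert_of_mem _ (Set.mem_iUnion.2 ⟨i, hs⟩))
    exact ⟨func f₀ u, by simp [LHom.onTerm, hf₀, hu]⟩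

end FirstOrder.Language.Term

namespace IFormula

def funSymbols : ∀ {α : Type}, IFormula L α → Set (Σ n, L.Functions n)
  | _, falsum => ∅
  | _, rel _ ts => ⋃ i, (ts i).funSymbols
  | _, disj a b | _, conj a b | _, impl a b => a.funSymbols ∪ b.funSymbols
  | _, ex φ | _, all φ => φ.funSymbols

def relSymbols : ∀ {α : Type}, IFormula L α → Set (Σ n, L.Relations n)
  | _, falsum => ∅
  | _, rel (l := n) R _ => {⟨n, R⟩}
  | _, disj a b | _, conj a b | _, impl a b => a.relSymbols ∪ b.relSymbols
  | _, ex φ | _, all φ => φ.relSymbols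

theorem funSymbols_finite {α : Type} (φ : IFormula L α) : φ.funSymbols.Finite := by
  induction φ with
  | falsum => exact Set.finite_empty
  | rel R ts => exact Set.finite_iUnion fun i => (ts i).funSymbols_finite
  | disj a b iha ihb | conj a b iha ihb | impl a b iha ihb => exact iha.union ihb
  | ex φ ih | all φ ih => exact ih

theorem relSymbols_finite {α : Type} (φ : IFormula L α) : φ.relSymbols.Finite := by
  induction φ with
  | falsum => exact Set.finite_empty
  | rel R ts => exact Set.finite_singleton _
  | disj a b iha ihb | conj a b iha ihb | impl a b iha ihb => exact iha.union ihb
  | ex φ ih | all φ ih => exact ih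

theorem mem_range_mapLang {L₀ : FirstOrder.Language.{u', v'}} {ϕ : L₀ →ᴸ L} {α : Type}
    {φ : IFormula L α} (hF : ∀ s ∈ φ.funSymbols, ∃ f, ϕ.onFunction f = s.2)
    (hR : ∀ s ∈ φ.relSymbols, ∃ R, ϕ.onRelation R = s.2) : φ ∈ Set.range (mapLang ϕ) := by
  induction φ with
  | falsum => exact ⟨falsum, rfl⟩
  | rel R ts =>
    obtain ⟨R₀, hR₀⟩ := hR _ rfl
    choose u hu using fun i => Term.mem_range_onTerm fun s hs => hF s (Set.mem_iUnion.2 ⟨i, hs⟩)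
    exact ⟨rel R₀ u, by simp [mapLang, hR₀, hu]⟩
  | disj a b iha ihb =>
    obtain ⟨a₀, rfl⟩ := iha (fun s hs => hF s (Or.inl hs)) fun s hs => hR s (Or.inl hs)
    obtain ⟨b₀, rfl⟩ := ihb (fun s hs => hF s (Or.inr hs)) fun s hs => hR s (Or.inr hs)
    exact ⟨disj a₀ b₀, rfl⟩
  | conj a b iha ihb =>
    obtain ⟨a₀, rfl⟩ := iha (fun s hs => hF s (Or.inl hs)) fun s hs => hR s (Or.inl hs)
    obtain ⟨b₀, rfl⟩ := ihb (fun s hs => hF s (Or.inr hs)) fun s hs => hR s (Or.inr hs)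
    exact ⟨conj a₀ b₀, rfl⟩
  | impl a b iha ihb =>
    obtain ⟨a₀, rfl⟩ := iha (fun s hs => hF s (Or.inl hs)) fun s hs => hR s (Or.inl hs)
    obtain ⟨b₀, rfl⟩ := ihb (fun s hs => hF s (Or.inr hs)) fun s hs => hR s (Or.inr hs)
    exact ⟨impl a₀ b₀, rfl⟩
  | ex φ ih =>
    obtain ⟨φ₀, rfl⟩ := ih hF hR
    exact ⟨ex φ₀, rfl⟩
  | all φ ih =>
    obtain ⟨φ₀, rfl⟩ := ih hF hR
    exact ⟨all φ₀, rfl⟩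

end IFormula

def enumLanguage (F : ∀ n, ℕ → Option (L.Functions n)) (R : ∀ n, ℕ → Option (L.Relations n)) :
    FirstOrder.Language.{0, 0} where
  Functions n := {i : ℕ // (F n i).isSome}
  Relations n := {i : ℕ // (R n i).isSome}

namespace enumLanguage

variable (F : ∀ n, ℕ → Option (L.Functions n)) (R : ∀ n, ℕ → Option (L.Relations n))

instance (n : ℕ) : Countable ((enumLanguage F R).Functions n) :=
  inferInstanceAs (Countable {i : ℕ // (F n i).isSome})

instance (n : ℕ) : Countable ((enumLanguage F R).Relations n) :=
  inferInstanceAs (Countable {i : ℕ // (R n i).isSome})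

def incl : enumLanguage F R →ᴸ L where
  onFunction n i := (F n i.1).get i.2
  onRelation n i := (R n i.1).get i.2

end enumLanguage

theorem exists_countable_lHom_mem_range (Φ : Finset (IFormula L ℕ)) :
    ∃ (L₀ : FirstOrder.Language.{0, 0}) (ϕ : L₀ →ᴸ L),
      Countable (IFormula L₀ ℕ) ∧ ∀ φ ∈ Φ, φ ∈ Set.range (IFormula.mapLang ϕ) := by
  have hF n : (Sigma.mk n ⁻¹' ⋃ φ ∈ Φ, φ.funSymbols).Countable :=
    (Φ.finite_toSet.biUnion fun φ _ => φ.funSymbols_finite).countable.preimage sigma_mk_injective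
  have hR n : (Sigma.mk n ⁻¹' ⋃ φ ∈ Φ, φ.relSymbols).Countable :=
    (Φ.finite_toSet.biUnion fun φ _ => φ.relSymbols_finite).countable.preimage sigma_mk_injective
  choose F hF using fun n => Set.countable_iff_exists_subset_range.1 ((hF n).image some)
  choose R hR using fun n => Set.countable_iff_exists_subset_range.1 ((hR n).image some)
  refine ⟨enumLanguage F R, enumLanguage.incl F R, inferInstance, fun φ hφ =>
    IFormula.mem_range_mapLang (fun ⟨n, f⟩ hf => ?_) fun ⟨n, r⟩ hr => ?_⟩
  · obtain ⟨i, hi⟩ := hF n ⟨f, Set.mem_biUnion hφ hf, rfl⟩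
    exact ⟨⟨i, by simp [hi]⟩, by simp [enumLanguage.incl, hi]⟩
  · obtain ⟨i, hi⟩ := hR n ⟨r, Set.mem_biUnion hφ hr, rfl⟩
    exact ⟨⟨i, by simp [hi]⟩, by simp [enumLanguage.incl, hi]⟩

/-- Variables are coded as pairs `(layer, index)`; the theory of a world of layer `k` speaks
about the variables of layers `≤ k`, so that layer `k + 1` supplies fresh Henkin witnesses. -/
def layerVars (k : ℕ) : Set ℕ := {n | (Nat.unpair n).1 ≤ k}

theorem zero_mem_layerVars (k : ℕ) : 0 ∈ layerVars k := by
  simp [layerVars, Nat.unpair_zero]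

theorem layerVars_mono {k l : ℕ} (h : k ≤ l) : layerVars k ⊆ layerVars l :=
  fun _ hn => le_trans hn h

theorem pair_mem_layerVars (k j : ℕ) : Nat.pair k j ∈ layerVars k := by
  simp [layerVars, Nat.unpair_pair]

theorem pair_succ_notMem_layerVars (k j : ℕ) : Nat.pair (k + 1) j ∉ layerVars k := by
  simp [layerVars, Nat.unpair_pair]

theorem exists_subset_layerVars {s : Set ℕ} (hs : s.Finite) : ∃ k, s ⊆ layerVars k :=
  let ⟨k, hk⟩ := hs.bddAbove
  ⟨k, fun n hn => (Nat.unpair_left_le n).trans (hk hn)⟩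

theorem infinite_range_pair (k : ℕ) : (Set.range (Nat.pair k)).Infinite :=
  Set.infinite_range_of_injective fun _ _ h => (Nat.pair_eq_pair.1 h).2

variable {L₀ : FirstOrder.Language.{u', v'}} (ϕ : L₀ →ᴸ L)

structure IsSaturated (k : ℕ) (T : Set (IFormula L ℕ)) : Prop where
  subset_range : T ⊆ Set.range (IFormula.mapLang ϕ)
  fvF_subset : ∀ φ ∈ T, fvF φ ⊆ layerVars k
  consistent : ¬Proves T ∅
  closed : ∀ φ : IFormula L₀ ℕ, fvF φ ⊆ layerVars k → Proves T {φ.mapLang ϕ} → φ.mapLang ϕ ∈ T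
  prime : ∀ a b : IFormula L₀ ℕ, (a.disj b).mapLang ϕ ∈ T → a.mapLang ϕ ∈ T ∨ b.mapLang ϕ ∈ T
  henkin : ∀ φ : IFormula L₀ (Option ℕ), (IFormula.ex φ).mapLang ϕ ∈ T →
    ∃ c ∈ layerVars k, (openF φ (Term.var c)).mapLang ϕ ∈ T

namespace Lindenbaum

noncomputable def henkinInsert (c : ℕ) :
    IFormula L₀ ℕ → Finset (IFormula L ℕ) → Finset (IFormula L ℕ)
  | .ex ψ, F => insert ((openF ψ (Term.var c)).mapLang ϕ) (insert ((IFormula.ex ψ).mapLang ϕ) F)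
  | φ, F => insert (φ.mapLang ϕ) F

theorem subset_henkinInsert (c : ℕ) (φ : IFormula L₀ ℕ) (F : Finset (IFormula L ℕ)) :
    F ⊆ henkinInsert ϕ c φ F := by
  cases φ with
  | ex ψ => exact (Finset.subset_insert _ _).trans (Finset.subset_insert _ _)
  | _ => exact Finset.subset_insert _ _

theorem mem_henkinInsert {c : ℕ} {φ : IFormula L₀ ℕ} {F : Finset (IFormula L ℕ)}
    {χ : IFormula L ℕ} (h : χ ∈ henkinInsert ϕ c φ F) :
    χ ∈ F ∨ χ = φ.mapLang ϕ ∨ ∃ ψ, φ = .ex ψ ∧ χ = (openF ψ (Term.var c)).mapLang ϕ := by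
  cases φ with
  | ex ψ =>
    rcases Finset.mem_insert.1 h with h | h
    · exact Or.inr (Or.inr ⟨ψ, rfl, h⟩)
    · rcases Finset.mem_insert.1 h with h | h
      · exact Or.inr (Or.inl h)
      · exact Or.inl h
  | _ => exact (Finset.mem_insert.1 h).symm.imp_right Or.inl

theorem mapLang_mem_henkinInsert (c : ℕ) (φ : IFormula L₀ ℕ) (F : Finset (IFormula L ℕ)) :
    φ.mapLang ϕ ∈ henkinInsert ϕ c φ F := by
  cases φ with
  | ex ψ => exact Finset.mem_insert_of_mem (Finset.mem_insert_self _ _)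
  | _ => exact Finset.mem_insert_self _ _

theorem witness_mem_henkinInsert (c : ℕ) (ψ : IFormula L₀ (Option ℕ)) (F : Finset (IFormula L ℕ)) :
    (openF ψ (Term.var c)).mapLang ϕ ∈ henkinInsert ϕ c (.ex ψ) F :=
  Finset.mem_insert_self _ _

theorem not_proves_union_henkinInsert {T : Set (IFormula L ℕ)} {F Δ : Finset (IFormula L ℕ)}
    (hF : ↑F ⊆ T) {φ : IFormula L₀ ℕ} {c : ℕ} (h : ¬Proves (insert (φ.mapLang ϕ) T) Δ)
    (hc : ∀ ψ ∈ insert (φ.mapLang ϕ) T, c ∉ fvF ψ) (hcΔ : ∀ ψ ∈ Δ, c ∉ fvF ψ) :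
    ¬Proves (T ∪ ↑(henkinInsert ϕ c φ F)) Δ := by
  have hT : T ∪ ↑F = T := Set.union_eq_self_of_subset_right hF
  cases φ with
  | ex ψ =>
    intro hp
    simp only [henkinInsert, Finset.coe_insert, Set.union_insert, hT,
      IFormula.mapLang_openF] at hp
    exact h (Proves.exL hp (Set.mem_insert _ _) hc hcΔ)
  | _ => simpa only [henkinInsert, Finset.coe_insert, Set.union_insert, hT] using h

noncomputable def freshVar (k : ℕ) (F : Finset (IFormula L ℕ)) : ℕ :=
  (exists_fresh (infinite_range_pair k) F).choose

theorem freshVar_mem_range (k : ℕ) (F : Finset (IFormula L ℕ)) :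
    freshVar k F ∈ Set.range (Nat.pair k) :=
  (exists_fresh (infinite_range_pair k) F).choose_spec.1

theorem freshVar_notMem (k : ℕ) {F : Finset (IFormula L ℕ)} {φ : IFormula L ℕ} (h : φ ∈ F) :
    freshVar k F ∉ fvF φ :=
  (exists_fresh (infinite_range_pair k) F).choose_spec.2 φ h

variable (enum : ℕ → IFormula L₀ ℕ) (k : ℕ) (S : Set (IFormula L ℕ)) (Δ : Finset (IFormula L ℕ))

def Admissible (n : ℕ) (F : Finset (IFormula L ℕ)) : Prop :=
  fvF (enum n) ⊆ layerVars (k + 1) ∧ ¬Proves (insert ((enum n).mapLang ϕ) (S ∪ ↑F)) Δ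

/-- Stage `n + 1` adds the `n`-th formula whenever `Δ` stays underivable, with a Henkin witness
from layer `k + 1`, which is fresh for `S`. -/
noncomputable def chain : ℕ → Finset (IFormula L ℕ)
  | 0 => ∅
  | n + 1 =>
    open Classical in
    if Admissible ϕ enum k S Δ n (chain n) then
      henkinInsert ϕ (freshVar (k + 1) (insert ((enum n).mapLang ϕ) (chain n ∪ Δ))) (enum n)
        (chain n)
    else chain n

def stage (n : ℕ) : Set (IFormula L ℕ) := S ∪ ↑(chain ϕ enum k S Δ n)

def limit : Set (IFormula L ℕ) := ⋃ n, stage ϕ enum k S Δ n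

variable {ϕ enum k S Δ}

theorem chain_succ_of_admissible {n : ℕ} (h : Admissible ϕ enum k S Δ n (chain ϕ enum k S Δ n)) :
    chain ϕ enum k S Δ (n + 1) = henkinInsert ϕ
      (freshVar (k + 1) (insert ((enum n).mapLang ϕ) (chain ϕ enum k S Δ n ∪ Δ))) (enum n)
        (chain ϕ enum k S Δ n) := by
  rw [chain]
  exact if_pos h

theorem chain_succ_of_not_admissible {n : ℕ}
    (h : ¬Admissible ϕ enum k S Δ n (chain ϕ enum k S Δ n)) :
    chain ϕ enum k S Δ (n + 1) = chain ϕ enum k S Δ n := by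
  rw [chain]
  exact if_neg h

theorem monotone_stage : Monotone (stage ϕ enum k S Δ) := by
  refine monotone_nat_of_le_succ fun n => Set.union_subset_union_right _ ?_
  by_cases h : Admissible ϕ enum k S Δ n (chain ϕ enum k S Δ n)
  · rw [chain_succ_of_admissible h]
    exact_mod_cast subset_henkinInsert ϕ _ _ _
  · rw [chain_succ_of_not_admissible h]

theorem stage_subset_limit (n : ℕ) : stage ϕ enum k S Δ n ⊆ limit ϕ enum k S Δ :=
  Set.subset_iUnion (stage ϕ enum k S Δ) n

theorem subset_limit : S ⊆ limit ϕ enum k S Δ :=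
  Set.subset_union_left.trans (stage_subset_limit 0)

theorem mem_limit_spec (hS : S ⊆ Set.range (IFormula.mapLang ϕ))
    (hSfv : ∀ φ ∈ S, fvF φ ⊆ layerVars k) :
    ∀ φ ∈ limit ϕ enum k S Δ, φ ∈ Set.range (IFormula.mapLang ϕ) ∧ fvF φ ⊆ layerVars (k + 1) := by
  suffices h : ∀ n, ∀ φ ∈ chain ϕ enum k S Δ n,
      φ ∈ Set.range (IFormula.mapLang ϕ) ∧ fvF φ ⊆ layerVars (k + 1) by
    simp only [limit, stage, Set.mem_iUnion, Set.mem_union, Finset.mem_coe]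
    rintro φ ⟨n, hφ | hφ⟩
    · exact ⟨hS hφ, (hSfv φ hφ).trans (layerVars_mono k.le_succ)⟩
    · exact h n φ hφ
  intro n
  induction n with
  | zero => simp [chain]
  | succ n ih =>
    by_cases h : Admissible ϕ enum k S Δ n (chain ϕ enum k S Δ n)
    · rw [chain_succ_of_admissible h]
      intro φ hφ
      rcases mem_henkinInsert ϕ hφ with hφ | rfl | ⟨ψ, hψ, rfl⟩
      · exact ih φ hφ
      · exact ⟨⟨_, rfl⟩, (IFormula.fvF_mapLang _).trans_subset h.1⟩
      · refine ⟨⟨_, rfl⟩, ?_⟩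
        rw [IFormula.fvF_mapLang]
        refine (fvF_openF_subset _ _).trans (Set.union_subset ?_ (hψ ▸ h.1))
        obtain ⟨j, hj⟩ := freshVar_mem_range (L := L) (k + 1)
          (insert ((enum n).mapLang ϕ) (chain ϕ enum k S Δ n ∪ Δ))
        simp only [tmFv, Set.singleton_subset_iff, ← hj]
        exact pair_mem_layerVars _ _
    · rwa [chain_succ_of_not_admissible h]

theorem not_proves_stage (hSfv : ∀ φ ∈ S, fvF φ ⊆ layerVars k) (hS : ¬Proves S Δ) (n : ℕ) :
    ¬Proves (stage ϕ enum k S Δ n) Δ := by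
  induction n with
  | zero => simpa [stage, chain] using hS
  | succ n ih =>
    by_cases h : Admissible ϕ enum k S Δ n (chain ϕ enum k S Δ n)
    · set F := insert ((enum n).mapLang ϕ) (chain ϕ enum k S Δ n ∪ Δ)
      have hfresh : ∀ ψ ∈ insert ((enum n).mapLang ϕ) (stage ϕ enum k S Δ n),
          freshVar (k + 1) F ∉ fvF ψ := by
        rintro ψ (rfl | hψ | hψ)
        · exact freshVar_notMem _ (Finset.mem_insert_self _ _)
        · obtain ⟨j, hj⟩ := freshVar_mem_range (k + 1) F
          exact fun hc => pair_succ_notMem_layerVars k j (hj ▸ hSfv ψ hψ hc)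
        · exact freshVar_notMem _ (by simp [F, Finset.mem_coe.1 hψ])
      have := not_proves_union_henkinInsert ϕ Set.subset_union_right h.2 hfresh
        fun ψ hψ => freshVar_notMem _ (by simp [F, hψ])
      rwa [Set.union_assoc, ← Finset.coe_union,
        Finset.union_eq_right.2 (subset_henkinInsert ϕ _ _ _), ← chain_succ_of_admissible h] at this
    · rwa [stage, chain_succ_of_not_admissible h]

theorem not_proves_limit (hSfv : ∀ φ ∈ S, fvF φ ⊆ layerVars k) (hS : ¬Proves S Δ) :
    ¬Proves (limit ϕ enum k S Δ) Δ := fun h =>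
  let ⟨n, hn⟩ := Proves.exists_of_iUnion monotone_stage h
  not_proves_stage hSfv hS n hn

theorem proves_insert_of_not_admissible {n : ℕ} (hφ : fvF (enum n) ⊆ layerVars (k + 1))
    (hn : ¬Admissible ϕ enum k S Δ n (chain ϕ enum k S Δ n)) :
    Proves (insert ((enum n).mapLang ϕ) (limit ϕ enum k S Δ)) Δ := by
  have : Proves (insert ((enum n).mapLang ϕ) (stage ϕ enum k S Δ n)) Δ := by
    simp only [Admissible, hφ, true_and, not_not] at hn
    exact hn
  exact this.mono (Set.insert_subset_insert (stage_subset_limit n))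

theorem proves_insert_of_notMem (henum : Function.Surjective enum) {φ : IFormula L₀ ℕ}
    (hφ : fvF φ ⊆ layerVars (k + 1)) (h : φ.mapLang ϕ ∉ limit ϕ enum k S Δ) :
    Proves (insert (φ.mapLang ϕ) (limit ϕ enum k S Δ)) Δ := by
  obtain ⟨n, rfl⟩ := henum φ
  by_cases hn : Admissible ϕ enum k S Δ n (chain ϕ enum k S Δ n)
  · refine absurd (stage_subset_limit (n + 1) (Or.inr ?_)) h
    rw [chain_succ_of_admissible hn]
    exact mapLang_mem_henkinInsert ϕ _ _ _
  · exact proves_insert_of_not_admissible hφ hn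

theorem exists_witness_of_mem_limit (henum : Function.Surjective enum)
    (hT : ¬Proves (limit ϕ enum k S Δ) Δ) {ψ : IFormula L₀ (Option ℕ)}
    (hψfv : fvF (IFormula.ex ψ) ⊆ layerVars (k + 1))
    (hψ : (IFormula.ex ψ).mapLang ϕ ∈ limit ϕ enum k S Δ) :
    ∃ c ∈ layerVars (k + 1), (openF ψ (Term.var c)).mapLang ϕ ∈ limit ϕ enum k S Δ := by
  obtain ⟨n, hn⟩ := henum (.ex ψ)
  by_cases hadm : Admissible ϕ enum k S Δ n (chain ϕ enum k S Δ n)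
  · obtain ⟨j, hj⟩ := freshVar_mem_range (k + 1)
      (insert ((enum n).mapLang ϕ) (chain ϕ enum k S Δ n ∪ Δ))
    refine ⟨_, hj ▸ pair_mem_layerVars _ _, stage_subset_limit (n + 1) (Or.inr ?_)⟩
    rw [chain_succ_of_admissible hadm]
    simp only [hn]
    exact witness_mem_henkinInsert ϕ _ _ _
  · have := proves_insert_of_not_admissible (hn ▸ hψfv) hadm
    rw [hn, Set.insert_eq_of_mem hψ] at this
    exact absurd this hT

end Lindenbaum

open Lindenbaum in
theorem exists_isSaturated [Countable (IFormula L₀ ℕ)] {k : ℕ} {S : Set (IFormula L ℕ)}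
    {Δ : Finset (IFormula L ℕ)} (hS : S ⊆ Set.range (IFormula.mapLang ϕ))
    (hSfv : ∀ φ ∈ S, fvF φ ⊆ layerVars k) (h : ¬Proves S Δ) :
    ∃ T, IsSaturated ϕ (k + 1) T ∧ S ⊆ T ∧ ¬Proves T Δ := by
  have : Nonempty (IFormula L₀ ℕ) := ⟨.falsum⟩
  obtain ⟨enum, henum⟩ := exists_surjective_nat (IFormula L₀ ℕ)
  have hspec := mem_limit_spec (enum := enum) (Δ := Δ) hS hSfv
  have hT := not_proves_limit (ϕ := ϕ) (enum := enum) hSfv h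
  have hmax {φ : IFormula L₀ ℕ} :=
    proves_insert_of_notMem (ϕ := ϕ) (k := k) (S := S) (Δ := Δ) (φ := φ) henum
  refine ⟨limit ϕ enum k S Δ, ⟨fun φ hφ => (hspec φ hφ).1, fun φ hφ => (hspec φ hφ).2,
    fun h' => hT (h'.mono_right (Finset.empty_subset _)), ?_, ?_, ?_⟩, subset_limit, hT⟩
  · intro φ hφ hp
    by_contra hn
    exact hT (hp.cut (hmax hφ hn))
  · intro a b hab
    have hfv := (hspec _ hab).2
    rw [IFormula.fvF_mapLang] at hfv
    by_contra! hn
    exact hT (Proves.disjL hab (hmax (Set.subset_union_left.trans hfv) hn.1)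
      (hmax (Set.subset_union_right.trans hfv) hn.2))
  · intro ψ hψ
    have hfv := (hspec _ hψ).2
    rw [IFormula.fvF_mapLang] at hfv
    exact exists_witness_of_mem_limit henum hT hfv hψ

section CanonicalModel

variable {L₀ : FirstOrder.Language.{0, 0}} (ϕ : L₀ →ᴸ L) (enum : ℕ → IFormula L₀ ℕ)

/-- The theory of a world is stored through the indices of its formulas under `enum`, which
makes the type of worlds small. -/
structure World : Type where
  layer : ℕ
  codes : Set ℕ
  isSaturated : IsSaturated ϕ layer ((fun i => (enum i).mapLang ϕ) '' codes)

namespace World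

variable {ϕ enum}

def theory (w : World ϕ enum) : Set (IFormula L ℕ) := (fun i => (enum i).mapLang ϕ) '' w.codes

def dom (w : World ϕ enum) : Set (L₀.Term ℕ) := {x | tmFv x ⊆ layerVars w.layer}

instance : Preorder (World ϕ enum) where
  le w w' := w.layer ≤ w'.layer ∧ w.theory ⊆ w'.theory
  le_refl _ := ⟨le_rfl, subset_rfl⟩
  le_trans _ _ _ h h' := ⟨h.1.trans h'.1, h.2.trans h'.2⟩

theorem dom_mono {w w' : World ϕ enum} (h : w ≤ w') : w.dom ⊆ w'.dom :=
  fun _ hx => hx.trans (layerVars_mono h.1)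

theorem var_mem_dom {w : World ϕ enum} {c : ℕ} (hc : c ∈ layerVars w.layer) :
    Term.var c ∈ w.dom := by
  simpa [dom, tmFv] using hc

theorem image_setOf_mapLang_mem (henum : Function.Surjective enum) {T : Set (IFormula L ℕ)}
    (hT : T ⊆ Set.range (IFormula.mapLang ϕ)) :
    (fun i => (enum i).mapLang ϕ) '' {i | (enum i).mapLang ϕ ∈ T} = T := by
  refine subset_antisymm (fun _ ⟨i, hi, h⟩ => h ▸ hi) fun φ hφ => ?_
  obtain ⟨ψ, rfl⟩ := hT hφ
  obtain ⟨i, rfl⟩ := henum ψ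
  exact ⟨i, hφ, rfl⟩

def ofSaturated (henum : Function.Surjective enum) {k : ℕ} {T : Set (IFormula L ℕ)}
    (hT : IsSaturated ϕ k T) : World ϕ enum :=
  ⟨k, {i | (enum i).mapLang ϕ ∈ T}, by rwa [image_setOf_mapLang_mem henum hT.subset_range]⟩

theorem theory_ofSaturated (henum : Function.Surjective enum) {k : ℕ} {T : Set (IFormula L ℕ)}
    (hT : IsSaturated ϕ k T) : (ofSaturated henum hT).theory = T :=
  image_setOf_mapLang_mem henum hT.subset_range

end World

open Classical in
/-- `var 0` lies in the domain of every world. -/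
noncomputable def canonicalFunMap {n : ℕ} (f : L.Functions n) (xs : Fin n → L₀.Term ℕ) :
    L₀.Term ℕ :=
  if h : ∃ f₀, ϕ.onFunction f₀ = f then .func h.choose xs else .var 0

theorem onTerm_canonicalFunMap {n : ℕ} (f : L₀.Functions n) (xs : Fin n → L₀.Term ℕ) :
    ϕ.onTerm (canonicalFunMap ϕ (ϕ.onFunction f) xs) =
      .func (ϕ.onFunction f) fun i => ϕ.onTerm (xs i) := by
  have h : ∃ f₀, ϕ.onFunction f₀ = ϕ.onFunction f := ⟨f, rfl⟩
  rw [canonicalFunMap, dif_pos h, LHom.onTerm, h.choose_spec]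

noncomputable def canonicalModel [Nonempty (World ϕ enum)] : FKModel L where
  W := World ϕ enum
  ne := inferInstance
  X := L₀.Term ℕ
  le := (· ≤ ·)
  le_refl := le_refl
  le_trans := le_trans
  D := World.dom
  D_ne w := ⟨_, World.var_mem_dom (zero_mem_layerVars w.layer)⟩
  D_mono := World.dom_mono
  funMap _ := canonicalFunMap ϕ
  funMap_mem w f xs hxs := by
    unfold canonicalFunMap
    split
    · exact Set.iUnion_subset hxs
    · exact World.var_mem_dom (zero_mem_layerVars w.layer)
  funMap_mono _ _ _ _ := rfl
  RelMap w R xs := IFormula.rel R (fun i => ϕ.onTerm (xs i)) ∈ w.theory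
  RelMap_dom w R xs h i := fun x hx => w.isSaturated.fvF_subset _ h
    (Set.mem_iUnion.2 ⟨i, (tmFv_onTerm ϕ (xs i)).symm ▸ hx⟩)
  RelMap_mono _ _ h hR := h.2 hR

namespace World

variable {ϕ enum} (w : World ϕ enum)

theorem fvF_subset {φ : IFormula L ℕ} (h : φ ∈ w.theory) : fvF φ ⊆ layerVars w.layer :=
  w.isSaturated.fvF_subset φ h

theorem mem_of_proves {φ : IFormula L₀ ℕ} (hφ : fvF φ ⊆ layerVars w.layer)
    (h : Proves w.theory {φ.mapLang ϕ}) : φ.mapLang ϕ ∈ w.theory :=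
  w.isSaturated.closed φ hφ h

theorem falsum_notMem : IFormula.falsum ∉ w.theory := fun h =>
  w.isSaturated.consistent
    ⟨{.falsum}, by rwa [Finset.coe_singleton, Set.singleton_subset_iff],
      LJm.axBot (Finset.mem_singleton_self _)⟩

theorem disj_mem_iff {a b : IFormula L₀ ℕ} (h : fvF (a.disj b) ⊆ layerVars w.layer) :
    (a.disj b).mapLang ϕ ∈ w.theory ↔ a.mapLang ϕ ∈ w.theory ∨ b.mapLang ϕ ∈ w.theory :=
  ⟨w.isSaturated.prime a b, fun hab => w.mem_of_proves h (hab.elim Proves.disjR_left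
    Proves.disjR_right)⟩

theorem conj_mem_iff {a b : IFormula L₀ ℕ} (h : fvF (a.conj b) ⊆ layerVars w.layer) :
    (a.conj b).mapLang ϕ ∈ w.theory ↔ a.mapLang ϕ ∈ w.theory ∧ b.mapLang ϕ ∈ w.theory :=
  ⟨fun hab => ⟨w.mem_of_proves (Set.subset_union_left.trans h) (Proves.conjL_left hab),
    w.mem_of_proves (Set.subset_union_right.trans h) (Proves.conjL_right hab)⟩,
    fun hab => w.mem_of_proves h (Proves.conjR hab.1 hab.2)⟩

theorem ex_mem_iff {ψ : IFormula L₀ (Option ℕ)} (h : fvF (IFormula.ex ψ) ⊆ layerVars w.layer) :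
    (IFormula.ex ψ).mapLang ϕ ∈ w.theory ↔ ∃ c ∈ w.dom, (openF ψ c).mapLang ϕ ∈ w.theory := by
  constructor
  · intro hψ
    obtain ⟨c, hc, hmem⟩ := w.isSaturated.henkin ψ hψ
    exact ⟨_, var_mem_dom hc, hmem⟩
  · rintro ⟨c, -, hmem⟩
    rw [IFormula.mapLang_openF] at hmem
    exact w.mem_of_proves h (Proves.exR hmem)

theorem exists_ge_of_not_proves [Countable (IFormula L₀ ℕ)] (henum : Function.Surjective enum)
    {l : ℕ} (hl : w.layer ≤ l) {S : Set (IFormula L ℕ)} {Δ : Finset (IFormula L ℕ)}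
    (hwS : w.theory ⊆ S) (hS : S ⊆ Set.range (IFormula.mapLang ϕ))
    (hSfv : ∀ φ ∈ S, fvF φ ⊆ layerVars l) (h : ¬Proves S Δ) :
    ∃ w' ≥ w, l < w'.layer ∧ S ⊆ w'.theory ∧ ¬Proves w'.theory Δ := by
  obtain ⟨T, hT, hST, hnT⟩ := exists_isSaturated ϕ hS hSfv h
  refine ⟨ofSaturated henum hT, ⟨hl.trans l.le_succ, ?_⟩, l.lt_succ_self, ?_, ?_⟩ <;>
    rw [theory_ofSaturated]
  exacts [hwS.trans hST, hST, hnT]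

theorem impl_mem_iff [Countable (IFormula L₀ ℕ)] (henum : Function.Surjective enum)
    {a b : IFormula L₀ ℕ} (h : fvF (a.impl b) ⊆ layerVars w.layer) :
    (a.impl b).mapLang ϕ ∈ w.theory ↔
      ∀ w' ≥ w, a.mapLang ϕ ∈ w'.theory → b.mapLang ϕ ∈ w'.theory := by
  constructor
  · intro hab w' hw' ha
    exact w'.mem_of_proves ((Set.subset_union_right.trans h).trans (layerVars_mono hw'.1))
      (Proves.implL (hw'.2 hab) ha)
  · intro H
    by_contra hn
    have hS : insert (a.mapLang ϕ) w.theory ⊆ Set.range (IFormula.mapLang ϕ) :=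
      Set.insert_subset ⟨a, rfl⟩ w.isSaturated.subset_range
    have hSfv : ∀ φ ∈ insert (a.mapLang ϕ) w.theory, fvF φ ⊆ layerVars w.layer := by
      rintro φ (rfl | hφ)
      · exact (IFormula.fvF_mapLang a).trans_subset (Set.subset_union_left.trans h)
      · exact w.fvF_subset hφ
    obtain ⟨w', hw', -, hSw', hnw'⟩ := w.exists_ge_of_not_proves henum le_rfl
      (Set.subset_insert _ _) hS hSfv fun hp => hn (w.mem_of_proves h hp.implR)
    exact hnw' (Proves.of_mem (H w' hw' (hSw' (Set.mem_insert _ _))) (Finset.mem_singleton_self _))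

theorem all_mem_iff [Countable (IFormula L₀ ℕ)] (henum : Function.Surjective enum)
    {ψ : IFormula L₀ (Option ℕ)} (h : fvF (IFormula.all ψ) ⊆ layerVars w.layer) :
    (IFormula.all ψ).mapLang ϕ ∈ w.theory ↔
      ∀ w' ≥ w, ∀ c ∈ w'.dom, (openF ψ c).mapLang ϕ ∈ w'.theory := by
  constructor
  · intro hψ w' hw' c hc
    refine w'.mem_of_proves ((fvF_openF_subset ψ c).trans (Set.union_subset hc
      (h.trans (layerVars_mono hw'.1)))) ?_
    rw [IFormula.mapLang_openF]
    exact Proves.allL _ (hw'.2 hψ)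
  · intro H
    by_contra hn
    set x := Nat.pair (w.layer + 1) 0
    have hx : x ∉ layerVars w.layer := pair_succ_notMem_layerVars _ _
    have hnp : ¬Proves w.theory {(openF ψ (Term.var x)).mapLang ϕ} := by
      intro hp
      rw [IFormula.mapLang_openF] at hp
      refine hn (w.mem_of_proves h (hp.allR (fun φ hφ hxφ => hx (w.fvF_subset hφ hxφ)) ?_))
      show x ∉ fvF ((IFormula.all ψ).mapLang ϕ)
      rw [IFormula.fvF_mapLang]
      exact fun hxψ => hx (h hxψ)
    obtain ⟨w', hw', hl, -, hnw'⟩ := w.exists_ge_of_not_proves henum w.layer.le_succ subset_rfl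
      w.isSaturated.subset_range
      (fun φ hφ => (w.fvF_subset hφ).trans (layerVars_mono w.layer.le_succ)) hnp
    have hx' : Term.var x ∈ w'.dom := var_mem_dom (layerVars_mono hl.le (pair_mem_layerVars _ _))
    exact hnw' (Proves.of_mem (H w' hw' _ hx') (Finset.mem_singleton_self _))

end World

variable {ϕ enum}

theorem onTerm_tval [Nonempty (World ϕ enum)] (w : World ϕ enum) {α : Type}
    (vv : α → L₀.Term ℕ) (u : L₀.Term α) :
    ϕ.onTerm ((canonicalModel ϕ enum).tval w vv (ϕ.onTerm u)) = ϕ.onTerm (u.subst vv) := by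
  induction u with
  | var => rfl
  | func f ts ih =>
    refine (onTerm_canonicalFunMap ϕ f _).trans ?_
    exact congrArg _ (funext ih)

theorem World.fvF_substF_subset (w : World ϕ enum) {α : Type} (φ : IFormula L₀ α)
    {vv : α → L₀.Term ℕ} (hvv : ∀ a, vv a ∈ w.dom) : fvF (φ.substF vv) ⊆ layerVars w.layer := by
  rw [fvF_substF]
  exact Set.iUnion₂_subset fun a _ => hvv a

theorem force_mapLang_iff [Countable (IFormula L₀ ℕ)] [Nonempty (World ϕ enum)]
    (henum : Function.Surjective enum) {α : Type} (φ : IFormula L₀ α) (w : World ϕ enum)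
    (vv : α → L₀.Term ℕ) (hvv : ∀ a, vv a ∈ w.dom) :
    (canonicalModel ϕ enum).Force w vv (φ.mapLang ϕ) ↔ (φ.substF vv).mapLang ϕ ∈ w.theory := by
  induction φ generalizing w with
  | falsum => exact iff_of_false id w.falsum_notMem
  | rel R ts =>
    show IFormula.rel _ (fun i => ϕ.onTerm ((canonicalModel ϕ enum).tval w vv (ϕ.onTerm (ts i))))
      ∈ w.theory ↔ IFormula.rel _ (fun i => ϕ.onTerm ((ts i).subst vv)) ∈ w.theory
    simp only [onTerm_tval]
  | disj a b iha ihb =>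
    rw [IFormula.substF, w.disj_mem_iff (w.fvF_substF_subset (a.disj b) hvv), ← iha w vv hvv,
      ← ihb w vv hvv]
    rfl
  | conj a b iha ihb =>
    rw [IFormula.substF, w.conj_mem_iff (w.fvF_substF_subset (a.conj b) hvv), ← iha w vv hvv,
      ← ihb w vv hvv]
    rfl
  | impl a b iha ihb =>
    rw [IFormula.substF, w.impl_mem_iff henum (w.fvF_substF_subset (a.impl b) hvv)]
    refine forall₂_congr fun w' hw' => ?_
    have hvv' a := World.dom_mono hw' (hvv a)
    rw [← iha w' vv hvv', ← ihb w' vv hvv']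
  | ex φ ih =>
    rw [IFormula.substF_ex, w.ex_mem_iff (ψ := φ.substF (IFormula.liftSubst vv))
      (w.fvF_substF_subset φ.ex hvv)]
    refine exists_congr fun (c : L₀.Term ℕ) => and_congr_right fun hc => ?_
    exact (ih w _ (by rintro (_ | a); exacts [hc, hvv a])).trans
      (by rw [openF_substF_liftSubst]; exact Iff.rfl)
  | all φ ih =>
    rw [IFormula.substF_all, w.all_mem_iff henum (ψ := φ.substF (IFormula.liftSubst vv))
      (w.fvF_substF_subset φ.all hvv)]
    refine forall₂_congr fun (w' : World ϕ enum) hw' => forall₂_congr fun (c : L₀.Term ℕ) hc => ?_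
    exact (ih w' _ (by rintro (_ | a); exacts [hc, World.dom_mono hw' (hvv a)])).trans
      (by rw [openF_substF_liftSubst]; exact Iff.rfl)

namespace World

open Classical in
noncomputable def valuation (w : World ϕ enum) (n : ℕ) : L₀.Term ℕ :=
  .var (if n ∈ layerVars w.layer then n else 0)

theorem valuation_mem_dom (w : World ϕ enum) (n : ℕ) : w.valuation n ∈ w.dom := by
  unfold valuation
  split_ifs with h
  exacts [var_mem_dom h, var_mem_dom (zero_mem_layerVars _)]

theorem force_mapLang_iff_mem [Countable (IFormula L₀ ℕ)] [Nonempty (World ϕ enum)]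
    (henum : Function.Surjective enum) (w : World ϕ enum) {φ : IFormula L₀ ℕ}
    (hφ : fvF φ ⊆ layerVars w.layer) :
    (canonicalModel ϕ enum).Force w w.valuation (φ.mapLang ϕ) ↔ φ.mapLang ϕ ∈ w.theory := by
  rw [force_mapLang_iff henum φ w _ w.valuation_mem_dom]
  suffices φ.substF w.valuation = φ by rw [this]
  refine (IFormula.substF_congr fun n hn => ?_).trans φ.substF_var
  simp [valuation, hφ hn]

end World

end CanonicalModel

theorem LJm_of_FOValid_of_mem_range {L₀ : FirstOrder.Language.{0, 0}} (ϕ : L₀ →ᴸ L)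
    [Countable (IFormula L₀ ℕ)] {Γ Δ : Finset (IFormula L ℕ)}
    (hΓΔ : ∀ φ ∈ Γ ∪ Δ, φ ∈ Set.range (IFormula.mapLang ϕ)) (h : FOValid L Γ Δ) :
    LJm L true Γ Δ := by
  by_contra hnd
  obtain ⟨k, hk⟩ := exists_subset_layerVars ((Γ ∪ Δ).finite_toSet.biUnion fun φ _ => fvF_finite φ)
  have hfv {φ} (hφ : φ ∈ Γ ∪ Δ) : fvF φ ⊆ layerVars k :=
    (Set.subset_biUnion_of_mem (u := fvF) (Finset.mem_coe.2 hφ)).trans hk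
  obtain ⟨T, hT, hΓT, hnT⟩ := exists_isSaturated ϕ (S := ↑Γ)
    (fun γ hγ => hΓΔ γ (Finset.mem_union_left _ hγ)) (fun γ hγ => hfv (Finset.mem_union_left _ hγ))
    fun ⟨Γ', hΓ', d⟩ => hnd (d.weaken (Finset.coe_subset.1 hΓ') subset_rfl)
  have : Nonempty (IFormula L₀ ℕ) := ⟨.falsum⟩
  obtain ⟨enum, henum⟩ := exists_surjective_nat (IFormula L₀ ℕ)
  let w : World ϕ enum := .ofSaturated henum hT
  have : Nonempty (World ϕ enum) := ⟨w⟩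
  have hforce {φ} (hφ : φ ∈ Γ ∪ Δ) : (canonicalModel ϕ enum).Force w w.valuation φ ↔ φ ∈ T := by
    obtain ⟨φ₀, rfl⟩ := hΓΔ _ hφ
    have hφ₀ : fvF φ₀ ⊆ layerVars w.layer :=
      (IFormula.fvF_mapLang φ₀ ▸ hfv hφ).trans (layerVars_mono k.le_succ)
    rw [World.force_mapLang_iff_mem henum w hφ₀, World.theory_ofSaturated]
  obtain ⟨δ, hδ, hδw⟩ := h (canonicalModel ϕ enum) w w.valuation w.valuation_mem_dom
    fun γ hγ => (hforce (Finset.mem_union_left _ hγ)).2 (hΓT hγ)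
  exact hnT (Proves.of_mem ((hforce (Finset.mem_union_right _ hδ)).1 hδw) hδ)

/-- completeness of LJm+(cut) for first-order Kripke semantics. -/
theorem LJm_cut_complete {Γ Δ : Finset (IFormula L ℕ)} (h : FOValid L Γ Δ) :
    LJm L true Γ Δ := by
  obtain ⟨L₀, ϕ, _, hϕ⟩ := exists_countable_lHom_mem_range (Γ ∪ Δ)
  exact LJm_of_FOValid_of_mem_range ϕ hϕ h
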